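/- arXiv:1705.09971 — 2 statements merged into one kernel-verified Lean document; each statement's English description precedes it below -/
import Mathlib

section
/- Davenport's identity: let b_1,…,b_N, r_1,…,r_N ∈ ℝ³, let w_1,…,w_N ∈ ℝ, and define B = ∑_n w_n b_n r_nᵀ, σ = tr B, ρ = B + Bᵀ, z = ∑_n w_n (b_n × r_n), and the symmetric 4×4 matrix K with upper-left 3×3 block ρ − σI, upper-right column z, lower-left row zᵀ, and lower-right entry σ. Then for every unit quaternion q (identified with the vector (q_v, q_s) ∈ ℝ⁴, vector part first), ∑_n w_n ⟨b_n, A(q) r_n⟩ = qᵀ K q, where A(q) = (q_s² − ‖q_v‖²) I + 2 q_v q_vᵀ − 2 q_s [q_v×]. -/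
/-!
Expanding `A(q)` and using the cyclicity of the triple product, each observation contributes
`⟨b, A(q) r⟩ = (qs² − ‖qv‖²)⟨b, r⟩ + 2⟨qv, b⟩⟨qv, r⟩ + 2 qs ⟨qv, b × r⟩`.
On the other side, the quadratic form of the bordered matrix `K` is
`σ (qs² − ‖qv‖²) + qvᵀ ρ qv + 2 qs ⟨qv, z⟩`, and its three terms are exactly the weighted sums
of the three terms above.
-/

open Matrix

/-- The skew-symmetric cross-product matrix `[v×]` of `v ∈ ℝ³`. -/
def crossMat (v : Fin 3 → ℝ) : Matrix (Fin 3) (Fin 3) ℝ :=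
  !![0, -v 2, v 1; v 2, 0, -v 0; -v 1, v 0, 0]

/-- The rotation matrix `A(q) = (qs² − ‖qv‖²) I + 2 qv qvᵀ − 2 qs [qv×]` associated to
the quaternion with vector part `qv` and scalar part `qs`. -/
def quatRotMat (qv : Fin 3 → ℝ) (qs : ℝ) : Matrix (Fin 3) (Fin 3) ℝ :=
  (qs ^ 2 - qv ⬝ᵥ qv) • (1 : Matrix (Fin 3) (Fin 3) ℝ)
    + (2 : ℝ) • vecMulVec qv qv - (2 * qs) • crossMat qv

/-- The attitude profile matrix `B = ∑ wₙ bₙ rₙᵀ`. -/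
noncomputable def profileB {N : ℕ} (w : Fin N → ℝ) (b r : Fin N → Fin 3 → ℝ) :
    Matrix (Fin 3) (Fin 3) ℝ :=
  ∑ n, w n • vecMulVec (b n) (r n)

/-- Davenport's `K` matrix: the symmetric 4×4 matrix with upper-left 3×3 block
`ρ − σI`, upper-right column `z`, lower-left row `zᵀ` and lower-right entry `σ`,
where `σ = tr B`, `ρ = B + Bᵀ` and `z = ∑ wₙ (bₙ × rₙ)`. The index `Fin 3 ⊕ Unit`
encodes the vector part (first) and scalar part (last) of a quaternion. -/
noncomputable def davenportK {N : ℕ} (w : Fin N → ℝ) (b r : Fin N → Fin 3 → ℝ) :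
    Matrix (Fin 3 ⊕ Unit) (Fin 3 ⊕ Unit) ℝ :=
  let B := profileB w b r
  let σ : ℝ := B.trace
  let ρ := B + Bᵀ
  let z : Fin 3 → ℝ := ∑ n, w n • (crossProduct (b n) (r n))
  fromBlocks (ρ - σ • 1) (Matrix.of fun i _ => z i) (Matrix.of fun _ j => z j)
    (Matrix.of fun _ _ => σ)

lemma crossMat_mulVec (v w : Fin 3 → ℝ) : crossMat v *ᵥ w = v ⨯₃ w := by
  ext i
  fin_cases i <;> simp [crossMat, cross_apply, mulVec, dotProduct, Fin.sum_univ_three] <;> ring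

lemma dotProduct_quatRotMat_mulVec (qv : Fin 3 → ℝ) (qs : ℝ) (b r : Fin 3 → ℝ) :
    b ⬝ᵥ quatRotMat qv qs *ᵥ r =
      (qs ^ 2 - qv ⬝ᵥ qv) * (b ⬝ᵥ r) + 2 * ((qv ⬝ᵥ b) * (qv ⬝ᵥ r))
        + 2 * qs * (qv ⬝ᵥ b ⨯₃ r) := by
  have h_triple : b ⬝ᵥ qv ⨯₃ r = -(qv ⬝ᵥ b ⨯₃ r) := by
    rw [triple_product_permutation, ← cross_anticomm, dotProduct_neg]
  simp only [quatRotMat, sub_mulVec, add_mulVec, smul_mulVec, one_mulVec, vecMulVec_mulVec,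
    crossMat_mulVec, dotProduct_sub, dotProduct_add, dotProduct_smul, h_triple, op_smul_eq_smul,
    smul_eq_mul, dotProduct_comm b qv]
  ring

lemma sumElim_dotProduct_fromBlocks_mulVec_sumElim {R l : Type*} [CommSemiring R] [Fintype l]
    (A : Matrix l l R) (z : l → R) (c : R) (x : l → R) (s : R) :
    Sum.elim x (fun _ : Unit => s) ⬝ᵥ
        fromBlocks A (of fun i (_ : Unit) => z i) (of fun _ j => z j) (of fun _ _ => c) *ᵥ
          Sum.elim x (fun _ => s) =
      x ⬝ᵥ A *ᵥ x + 2 * s * (x ⬝ᵥ z) + c * s ^ 2 := by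
  rw [fromBlocks_mulVec, Sum.elim_comp_inl, Sum.elim_comp_inr, sumElim_dotProduct_sumElim,
    dotProduct_add, dotProduct_add]
  have hcol : x ⬝ᵥ (of fun i (_ : Unit) => z i) *ᵥ (fun _ => s) = s * (x ⬝ᵥ z) := by
    simp only [mulVec, dotProduct, of_apply, Finset.univ_unique, Finset.sum_singleton,
      Finset.mul_sum]
    exact Finset.sum_congr rfl fun _ _ => by ring
  have hrow : (fun _ : Unit => s) ⬝ᵥ (of fun _ j => z j) *ᵥ x = s * (x ⬝ᵥ z) := by
    simp only [mulVec, dotProduct, of_apply, Finset.univ_unique, Finset.sum_singleton,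
      Finset.mul_sum]
    exact Finset.sum_congr rfl fun _ _ => by ring
  have hcorner :
      (fun _ : Unit => s) ⬝ᵥ (of fun (_ _ : Unit) => c) *ᵥ (fun _ => s) = c * s ^ 2 := by
    simp only [mulVec, dotProduct, of_apply, Finset.univ_unique, Finset.sum_singleton]
    ring
  rw [hcol, hrow, hcorner]
  ring

section Observations

variable {N : ℕ} (w : Fin N → ℝ) (b r : Fin N → Fin 3 → ℝ)

lemma trace_profileB : (profileB w b r).trace = ∑ n, w n * (b n ⬝ᵥ r n) := by
  simp [profileB, trace_sum, trace_smul, trace_vecMulVec]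

lemma dotProduct_profileB_mulVec (x y : Fin 3 → ℝ) :
    x ⬝ᵥ profileB w b r *ᵥ y = ∑ n, w n * ((x ⬝ᵥ b n) * (r n ⬝ᵥ y)) := by
  simp only [profileB, sum_mulVec, smul_mulVec, vecMulVec_mulVec, dotProduct_sum,
    dotProduct_smul, op_smul_eq_smul, smul_eq_mul]
  simp_rw [mul_comm (r _ ⬝ᵥ y)]

lemma sumElim_dotProduct_davenportK_mulVec_sumElim (qv : Fin 3 → ℝ) (qs : ℝ) :
    (Sum.elim qv fun _ => qs) ⬝ᵥ davenportK w b r *ᵥ (Sum.elim qv fun _ => qs) =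
      (qs ^ 2 - qv ⬝ᵥ qv) * (profileB w b r).trace
        + qv ⬝ᵥ (profileB w b r + (profileB w b r)ᵀ) *ᵥ qv
        + 2 * qs * (qv ⬝ᵥ ∑ n, w n • b n ⨯₃ r n) := by
  rw [davenportK, sumElim_dotProduct_fromBlocks_mulVec_sumElim]
  simp only [sub_mulVec, dotProduct_sub, smul_mulVec, one_mulVec, dotProduct_smul, smul_eq_mul]
  ring

end Observations

theorem davenport_identity_general {N : ℕ} (w : Fin N → ℝ) (b r : Fin N → Fin 3 → ℝ)
    (qv : Fin 3 → ℝ) (qs : ℝ) :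
    ∑ n, w n * (b n ⬝ᵥ (quatRotMat qv qs).mulVec (r n)) =
      (Sum.elim qv fun _ => qs) ⬝ᵥ
        (davenportK w b r).mulVec (Sum.elim qv fun _ => qs) := by
  simp only [dotProduct_quatRotMat_mulVec, sumElim_dotProduct_davenportK_mulVec_sumElim,
    trace_profileB, add_mulVec, dotProduct_add, dotProduct_transpose_mulVec,
    dotProduct_profileB_mulVec, dotProduct_sum,
    dotProduct_smul, smul_eq_mul, Finset.mul_sum, ← Finset.sum_add_distrib]
  refine Finset.sum_congr rfl fun n _ => ?_
  rw [dotProduct_comm (r n) qv]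
  ring

/-- Davenport's identity: for every unit quaternion `q = (qv, qs)` (written as a
vector in `ℝ⁴`, vector part first), `∑ wₙ ⟨bₙ, A(q) rₙ⟩ = qᵀ K q`. -/
theorem davenport_identity {N : ℕ} (w : Fin N → ℝ) (b r : Fin N → Fin 3 → ℝ)
    (qv : Fin 3 → ℝ) (qs : ℝ) (hq : qs ^ 2 + qv ⬝ᵥ qv = 1) :
    ∑ n, w n * (b n ⬝ᵥ (quatRotMat qv qs).mulVec (r n)) =
      (Sum.elim qv fun _ => qs) ⬝ᵥ
        (davenportK w b r).mulVec (Sum.elim qv fun _ => qs) :=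
  davenport_identity_general w b r qv qs
end

section
/- If b_1,…,b_N and r_1,…,r_N are unit vectors in ℝ³ and w_1,…,w_N are nonnegative reals, then with K the 4×4 Davenport matrix built from B = ∑_n w_n b_n r_nᵀ, σ = tr B, ρ = B + Bᵀ, z = ∑_n w_n (b_n × r_n) (upper-left block ρ − σI, upper-right z, lower-left zᵀ, lower-right σ), every unit vector q ∈ ℝ⁴ satisfies qᵀ K q ≤ ∑_{n=1}^N w_n. In particular the maximum eigenvalue λ_m of K satisfies λ_m ≤ λ_0 := ∑_n w_n, so the TASTE statistic λ_0 − λ_m is nonnegative. -/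
/-!
Writing `q = (v, s)` as the quaternion `s + v`, the quadratic form of the single-pair matrix `Kₙ` is
`⟨q bₙ, rₙ q⟩` for the pure quaternions `bₙ, rₙ`. Both products have norm `|q|`, so the polarization
identity `2⟨x, y⟩ = |x|² + |y|² − |x − y|²` bounds `qᵀ Kₙ q` by `|q|²`. Since `K = ∑ wₙ Kₙ` with
`wₙ ≥ 0`, this gives `qᵀ K q ≤ (∑ wₙ) |q|²`, and evaluating at an eigenvector bounds every eigenvalue.
-/

open Matrix

noncomputable def davenportKPair (b r : Fin 3 → ℝ) : Matrix (Fin 3 ⊕ Unit) (Fin 3 ⊕ Unit) ℝ :=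
  fromBlocks (vecMulVec b r + (vecMulVec b r)ᵀ - (b ⬝ᵥ r) • 1)
    (Matrix.of fun i _ => (b ⨯₃ r) i) (Matrix.of fun _ j => (b ⨯₃ r) j)
    (Matrix.of fun _ _ => b ⬝ᵥ r)

theorem davenportK_eq_sum {N : ℕ} (w : Fin N → ℝ) (b r : Fin N → Fin 3 → ℝ) :
    davenportK w b r = ∑ n, w n • davenportKPair (b n) (r n) := by
  have trace_vecMulVec : ∀ n, (vecMulVec (b n) (r n)).trace = b n ⬝ᵥ r n := fun n => by
    simp [trace, vecMulVec_apply, dotProduct]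
  ext (i | _) (j | _) <;>
    simp [davenportK, davenportKPair, profileB, Matrix.sum_apply, trace_sum, trace_vecMulVec,
      Finset.sum_add_distrib, Finset.sum_sub_distrib, Finset.sum_mul, mul_sub, mul_add,
      vecMulVec_apply, mul_assoc, mul_comm (r _ _)]

theorem davenportKPair_quadForm_le (b r : Fin 3 → ℝ) (q : Fin 3 ⊕ Unit → ℝ) :
    q ⬝ᵥ davenportKPair b r *ᵥ q ≤ (b ⬝ᵥ b + r ⬝ᵥ r) / 2 * (q ⬝ᵥ q) := by
  set v := q ∘ Sum.inl
  set s := q (Sum.inr ())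
  -- `(v ⬝ᵥ r - b ⬝ᵥ v, u)` is `q b − r q` in quaternion coordinates
  set u := s • (b - r) - b ⨯₃ v - r ⨯₃ v
  have sum_sq : 2 * (q ⬝ᵥ davenportKPair b r *ᵥ q) + (v ⬝ᵥ r - b ⬝ᵥ v) ^ 2 + u ⬝ᵥ u =
      (b ⬝ᵥ b + r ⬝ᵥ r) * (q ⬝ᵥ q) := by
    simp only [u, v, s, dotProduct, Fin.sum_univ_three, Pi.sub_apply, Pi.smul_apply, smul_eq_mul]
    simp [davenportKPair, dotProduct, mulVec, Fintype.sum_sum_type, Fin.sum_univ_three,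
      cross_apply, vecMulVec_apply, one_apply]
    ring
  have u_nonneg : 0 ≤ u ⬝ᵥ u := by simpa using dotProduct_self_star_nonneg u
  linarith [sq_nonneg (v ⬝ᵥ r - b ⬝ᵥ v)]

theorem davenportK_quadForm_le {N : ℕ} (w : Fin N → ℝ) (hw : ∀ n, 0 ≤ w n)
    (b r : Fin N → Fin 3 → ℝ) (hb : ∀ n, b n ⬝ᵥ b n = 1) (hr : ∀ n, r n ⬝ᵥ r n = 1)
    (q : Fin 3 ⊕ Unit → ℝ) :
    q ⬝ᵥ davenportK w b r *ᵥ q ≤ (∑ n, w n) * (q ⬝ᵥ q) := by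
  rw [davenportK_eq_sum, sum_mulVec, dotProduct_sum, Finset.sum_mul]
  gcongr with n
  rw [smul_mulVec, dotProduct_smul, smul_eq_mul]
  refine mul_le_mul_of_nonneg_left ?_ (hw n)
  simpa [hb n, hr n] using davenportKPair_quadForm_le (b n) (r n) q

theorem le_of_mulVec_eq_smul_of_quadForm_le {ι : Type*} [Fintype ι] {A : Matrix ι ι ℝ} {c lam : ℝ}
    {v : ι → ℝ} (hA : v ⬝ᵥ A *ᵥ v ≤ c * (v ⬝ᵥ v)) (hv : v ≠ 0) (hev : A *ᵥ v = lam • v) :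
    lam ≤ c := by
  have hv_pos : 0 < v ⬝ᵥ v :=
    lt_of_le_of_ne (by simpa using dotProduct_self_star_nonneg v)
      (Ne.symm (dotProduct_self_eq_zero.not.mpr hv))
  rw [hev, dotProduct_smul, smul_eq_mul] at hA
  exact le_of_mul_le_mul_right hA hv_pos

/-- For unit vectors `bₙ, rₙ` and nonnegative weights `wₙ`, every unit vector
`q ∈ ℝ⁴` satisfies `qᵀ K q ≤ λ₀ := ∑ wₙ`; in particular every eigenvalue of `K`
(hence the maximum eigenvalue `λₘ`) is at most `λ₀`, so the TASTE statistic
`λ₀ − λₘ` is nonnegative. -/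
theorem davenportK_quadForm_le_totalWeight {N : ℕ} (w : Fin N → ℝ) (hw : ∀ n, 0 ≤ w n)
    (b r : Fin N → Fin 3 → ℝ) (hb : ∀ n, b n ⬝ᵥ b n = 1) (hr : ∀ n, r n ⬝ᵥ r n = 1) :
    (∀ q : Fin 3 ⊕ Unit → ℝ, q ⬝ᵥ q = 1 →
        q ⬝ᵥ (davenportK w b r).mulVec q ≤ ∑ n, w n) ∧
    (∀ (lam : ℝ) (v : Fin 3 ⊕ Unit → ℝ), v ≠ 0 →
        (davenportK w b r).mulVec v = lam • v → lam ≤ ∑ n, w n) := by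
  refine ⟨fun q hq => ?_, fun lam v hv hev => ?_⟩
  · simpa [hq] using davenportK_quadForm_le w hw b r hb hr q
  · exact le_of_mulVec_eq_smul_of_quadForm_le (davenportK_quadForm_le w hw b r hb hr v) hv hev
end
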